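/- arXiv:1904.11794 — 6 statements merged into one kernel-verified Lean document; each statement's English description precedes it below -/
import Mathlib

section
/- Conversely, if a time-varying finite state system x(k+1) = F(k, x(k)) on a finite set V is periodic of period N and every solution (from every initial time and initial condition) is periodic, then for each k the map x ↦ F(k, x) is injective. -/
/-!
Run the system from time `k` starting at `a` and at `b`. If `F k a = F k b`, the two orbits agree
from time `k + 1` on. Both orbits are periodic, and two periodic sequences that eventually agree
are equal, so the orbits already agree at time `k`, i.e. `a = b`.
-/

open Function

theorem Function.Periodic.eq_of_eq_of_forall_ge {α : Type*} {f g : ℕ → α} {p q n₀ : ℕ}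
    (hf : Periodic f p) (hp : 0 < p) (hg : Periodic g q) (hq : 0 < q)
    (h : ∀ n ≥ n₀, f n = g n) : f = g := by
  funext n
  have hlarge : n₀ ≤ n + n₀ * q * p := by nlinarith [Nat.mul_pos hq hp]
  calc f n = f (n + n₀ * q * p) := by simpa using ((hf.nat_mul (n₀ * q)) n).symm
    _ = g (n + n₀ * q * p) := h _ hlarge
    _ = g (n + n₀ * p * q) := by rw [Nat.mul_right_comm]
    _ = g n := by simpa using (hg.nat_mul (n₀ * p)) n

/-- `orbitFrom F k₀ v n` is the state at time `k₀ + n` of the solution starting at `v` at time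
`k₀`. -/
def orbitFrom {V : Type*} (F : ℕ → V → V) (k₀ : ℕ) (v : V) : ℕ → V
  | 0 => v
  | n + 1 => F (k₀ + n) (orbitFrom F k₀ v n)

section orbitFrom

variable {V : Type*} (F : ℕ → V → V)

@[simp]
theorem orbitFrom_zero (k₀ : ℕ) (v : V) : orbitFrom F k₀ v 0 = v := rfl

theorem orbitFrom_succ' (k₀ : ℕ) (v : V) (n : ℕ) :
    orbitFrom F k₀ v (n + 1) = orbitFrom F (k₀ + 1) (F k₀ v) n := by
  induction n with
  | zero => rfl
  | succ n ih => rw [orbitFrom, ih, orbitFrom, Nat.add_right_comm k₀ 1 n, Nat.add_assoc]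

theorem exists_periodic_orbitFrom {k₀ : ℕ}
    (hsol : ∀ x : ℕ → V, (∀ k ≥ k₀, x (k + 1) = F k (x k)) →
      ∃ T > 0, ∀ k ≥ k₀, x (k + T) = x k)
    (v : V) : ∃ T > 0, Periodic (orbitFrom F k₀ v) T := by
  obtain ⟨T, hT, hx⟩ := hsol (fun k => orbitFrom F k₀ v (k - k₀)) fun k hk => by
    rw [show k + 1 - k₀ = k - k₀ + 1 by omega, orbitFrom, Nat.add_sub_cancel' hk]
  refine ⟨T, hT, fun n => ?_⟩
  have hxn := hx (k₀ + n) (Nat.le_add_right k₀ n)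
  rwa [Nat.add_assoc, Nat.add_sub_cancel_left, Nat.add_sub_cancel_left] at hxn

end orbitFrom

theorem tvfss_all_solutions_periodic_imp_nonsingular_general
    (V : Type*) (F : ℕ → V → V)
    (hsol : ∀ (k₀ : ℕ) (x : ℕ → V), (∀ k ≥ k₀, x (k + 1) = F k (x k)) →
      ∃ T > 0, ∀ k ≥ k₀, x (k + T) = x k) :
    ∀ k, Function.Injective (F k) := by
  intro k a b hab
  obtain ⟨Ta, hTa, hpa⟩ := exists_periodic_orbitFrom F (hsol k) a
  obtain ⟨Tb, hTb, hpb⟩ := exists_periodic_orbitFrom F (hsol k) b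
  have horbit : orbitFrom F k a = orbitFrom F k b := by
    refine hpa.eq_of_eq_of_forall_ge hTa hpb hTb (n₀ := 1) fun n hn => ?_
    obtain ⟨m, rfl⟩ := Nat.exists_eq_add_of_le' hn
    rw [orbitFrom_succ', orbitFrom_succ', hab]
  simpa using congrFun horbit 0

theorem tvfss_all_solutions_periodic_imp_nonsingular
    (V : Type*) [Fintype V] (F : ℕ → V → V) (N : ℕ) (hN : 0 < N)
    (hper : ∀ k x, F (k + N) x = F k x)
    (hsol : ∀ (k₀ : ℕ) (x : ℕ → V), (∀ k ≥ k₀, x (k + 1) = F k (x k)) →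
      ∃ T > 0, ∀ k ≥ k₀, x (k + T) = x k) :
    ∀ k, Function.Injective (F k) :=
  tvfss_all_solutions_periodic_imp_nonsingular_general V F hsol
end

section
/- Let F be a finite field and A : ℕ → Matrix (Fin n) (Fin n) F be N-periodic (A(k+N) = A(k)). Every solution of the linear system x(k+1) = A(k) x(k) over F^n is periodic if and only if each matrix A(0), A(1), …, A(N-1) is invertible. -/
open Matrix

theorem pfss_all_solutions_periodic_iff_nonsingular
    (F : Type*) [Field F] [Fintype F] (n N : ℕ) (hN : 0 < N)
    (A : ℕ → Matrix (Fin n) (Fin n) F)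
    (hper : ∀ k, A (k + N) = A k) :
    (∀ x : ℕ → (Fin n → F), (∀ k, x (k + 1) = (A k) *ᵥ x k) →
      ∃ T > 0, ∀ k, x (k + T) = x k) ↔
    (∀ k < N, IsUnit (A k)) := by
  classical
  set P : ℕ → Matrix (Fin n) (Fin n) F :=
    fun k => Nat.rec 1 (fun k Pk => A k * Pk) k with hP
  have hP0 : P 0 = 1 := rfl
  have hPs : ∀ k, P (k+1) = A k * P k := fun k => rfl
  have hPshift : ∀ k, P (k + N) = P k * P N := by
    intro k
    induction k with
    | zero => simp [hP0]
    | succ k ih =>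
      have h1 : k + 1 + N = (k + N) + 1 := by ring
      rw [h1, hPs, ih, hper, ← mul_assoc, ← hPs]
  have hPmul : ∀ m k, P (k + m * N) = P k * (P N) ^ m := by
    intro m
    induction m with
    | zero => intro k; simp
    | succ m ih =>
      intro k
      have h1 : k + (m+1) * N = (k + m * N) + N := by ring
      rw [h1, hPshift, ih, pow_succ, mul_assoc]
  have hsol : ∀ (x : ℕ → Fin n → F), (∀ k, x (k + 1) = A k *ᵥ x k) →
      ∀ k, x k = P k *ᵥ x 0 := by
    intro x hx k
    induction k with
    | zero => simp [hP0]
    | succ k ih => rw [hx, ih, hPs, mulVec_mulVec]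
  constructor
  · intro h k hk
    have hsurj : Function.Surjective (P N).mulVec := by
      intro x0
      obtain ⟨T, hT, hx⟩ := h (fun k => P k *ᵥ x0)
        (fun k => by show P (k+1) *ᵥ x0 = A k *ᵥ (P k *ᵥ x0); rw [hPs, ← mulVec_mulVec])
      have key : ∀ m : ℕ, P (m * T) *ᵥ x0 = x0 := by
        intro m
        induction m with
        | zero => simp [hP0]
        | succ m ih =>
          have h1 : (m+1) * T = m * T + T := by ring
          rw [h1]
          have := hx (m * T)
          simpa [this] using ih
      have hTN : P (T * N) *ᵥ x0 = x0 := by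
        have := key N
        rwa [Nat.mul_comm] at this
      have hpow : (P N) ^ T *ᵥ x0 = x0 := by
        have := hPmul T 0
        simp [hP0] at this
        rwa [this] at hTN
      obtain ⟨T', rfl⟩ := Nat.exists_eq_succ_of_ne_zero hT.ne'
      refine ⟨(P N) ^ T' *ᵥ x0, ?_⟩
      rw [mulVec_mulVec, ← pow_succ']
      exact hpow
    have hU : IsUnit (P N) := (Matrix.mulVec_surjective_iff_isUnit).1 hsurj
    have hdet : ∀ m, (P m).det = ∏ i ∈ Finset.range m, (A i).det := by
      intro m
      induction m with
      | zero => simp [hP0]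
      | succ m ih => rw [hPs, det_mul, ih, Finset.prod_range_succ]; ring
    have hdetN : (∏ i ∈ Finset.range N, (A i).det) ≠ 0 := by
      rw [← hdet]
      exact ((isUnit_iff_ne_zero).1 ((isUnit_iff_isUnit_det _).1 hU))
    have := Finset.prod_ne_zero_iff.1 hdetN k (Finset.mem_range.2 hk)
    exact (isUnit_iff_isUnit_det _).2 (isUnit_iff_ne_zero.2 this)
  · intro h x hx
    have hall : ∀ k, IsUnit (A k) := by
      intro k
      induction k using Nat.strong_induction_on with
      | _ k ih =>
        rcases lt_or_ge k N with hk | hk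
        · exact h k hk
        · have h1 : k = (k - N) + N := by omega
          rw [h1, hper]
          exact ih (k - N) (by omega)
    have hUN : IsUnit (P N) := by
      have : ∀ m, IsUnit (P m) := by
        intro m
        induction m with
        | zero => simp [hP0]
        | succ m ih => rw [hPs]; exact (hall m).mul ih
      exact this N
    obtain ⟨u, hu⟩ := hUN
    set c := Fintype.card (Matrix (Fin n) (Fin n) F)ˣ with hc
    have hc0 : 0 < c := Fintype.card_pos
    have hucard : (P N) ^ c = 1 := by
      have : u ^ c = 1 := pow_card_eq_one
      calc (P N) ^ c = (u : Matrix (Fin n) (Fin n) F) ^ c := by rw [hu]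
        _ = ((u ^ c : (Matrix (Fin n) (Fin n) F)ˣ) : Matrix (Fin n) (Fin n) F) := by
            rw [Units.val_pow_eq_pow_val]
        _ = 1 := by rw [this]; rfl
    refine ⟨c * N, Nat.mul_pos hc0 hN, ?_⟩
    intro k
    rw [hsol x hx (k + c * N), hsol x hx k, hPmul, hucard, mul_one]
end

section
/- Let F be a finite field and consider a non-singular N-periodic linear system x(k+1) = A(k)x(k) over F^n. Define the subspace 𝒜 = ⋂_{0 ≤ i < j ≤ N-1} ker(A(i) − A(j)). If a periodic solution x(k) of period T contains at least one point not in 𝒜, then gcd(T, N) ≠ 1. -/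
/-! If gcd(T, N) = 1, the Chinese remainder theorem gives for every index i a time K with
K ≡ k₀ (mod T) and K ≡ i (mod N). Then x(K) = x(k₀) and x(K + 1) = x(k₀ + 1), while the step
at time K is A(i); hence A(i) x(k₀) = x(k₀ + 1) = A(k₀) x(k₀) for every i, so x(k₀) ∈ 𝒜. -/

open Matrix Function

theorem Function.Periodic.eq_of_modEq {α : Type*} {f : ℕ → α} {c a b : ℕ} (hf : Periodic f c)
    (h : a ≡ b [MOD c]) : f a = f b := by
  rw [← hf.map_mod_nat a, ← hf.map_mod_nat b, h]

theorem Function.Periodic.apply_orbit_eq_of_coprime {α : Type*} {f : ℕ → α → α} {x : ℕ → α}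
    {N T : ℕ} (hf : Periodic f N) (hx : ∀ k, x (k + 1) = f k (x k)) (hxT : Periodic x T)
    (hTN : T.Coprime N) (i k : ℕ) : f i (x k) = f k (x k) := by
  obtain ⟨K, hKk, hKi⟩ := Nat.chineseRemainder hTN k i
  calc f i (x k) = f K (x K) := by rw [hf.eq_of_modEq hKi, hxT.eq_of_modEq hKk]
    _ = x (K + 1) := (hx K).symm
    _ = x (k + 1) := hxT.eq_of_modEq (hKk.add_right 1)
    _ = f k (x k) := hx k

theorem pfss_orbit_outside_A_gcd_ne_one_general
    (F : Type*) [Field F] (n N : ℕ)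
    (A : ℕ → Matrix (Fin n) (Fin n) F)
    (hper : ∀ k, A (k + N) = A k)
    (x : ℕ → (Fin n → F)) (hx : ∀ k, x (k + 1) = (A k) *ᵥ x k)
    (T : ℕ) (hTper : ∀ k, x (k + T) = x k)
    (hout : ∃ k0, ¬ (∀ i j, i < j → j < N → (A i - A j) *ᵥ x k0 = 0)) :
    Nat.gcd T N ≠ 1 := by
  intro hTN
  obtain ⟨k0, hk0⟩ := hout
  have hstep : Periodic (fun k v => A k *ᵥ v) N := fun k => by simp only [hper]
  have key : ∀ i, A i *ᵥ x k0 = A k0 *ᵥ x k0 := fun i =>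
    hstep.apply_orbit_eq_of_coprime hx hTper hTN i k0
  exact hk0 fun i j _ _ => by rw [sub_mulVec, key i, key j, sub_self]

theorem pfss_orbit_outside_A_gcd_ne_one
    (F : Type*) [Field F] [Fintype F] (n N : ℕ) (hN : 0 < N)
    (A : ℕ → Matrix (Fin n) (Fin n) F)
    (hper : ∀ k, A (k + N) = A k)
    (hns : ∀ k, IsUnit (A k))
    (x : ℕ → (Fin n → F)) (hx : ∀ k, x (k + 1) = (A k) *ᵥ x k)
    (T : ℕ) (hT : 0 < T) (hTper : ∀ k, x (k + T) = x k)
    (hTmin : ∀ T' > 0, (∀ k, x (k + T') = x k) → T ≤ T')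
    (hout : ∃ k0, ¬ (∀ i j, i < j → j < N → (A i - A j) *ᵥ x k0 = 0)) :
    Nat.gcd T N ≠ 1 :=
  pfss_orbit_outside_A_gcd_ne_one_general F n N A hper x hx T hTper hout
end

section
/- Let x(k+1) = A(k)x(k) be a non-singular N-periodic linear system over a finite field, with N prime. Then every periodic orbit containing a point outside 𝒜 = ⋂_{i<j} ker(A(i) − A(j)) has period divisible by N. -/
/-!
Suppose `N ∤ T`. Since `N` is prime, `T` is invertible mod `N`, so the times `k₀ + m T` meet every
residue class mod `N`. The orbit returns to `x(k₀)` at each of these times, and there the system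
moves it on to `x(k₀ + 1)`; by `N`-periodicity every `A(c)` therefore sends `x(k₀)` to
`x(k₀ + 1)`, i.e. `x(k₀) ∈ 𝒜`.
-/

open Matrix Function

lemma Function.Periodic.apply_mod_nat {α : Type*} {f : ℕ → α} {N : ℕ} (hf : Periodic f N)
    (a : ℕ) : f (a % N) = f a := by
  conv_rhs => rw [← Nat.mod_add_div' a N]
  exact (hf.nat_mul (a / N) (a % N)).symm

lemma Function.Periodic.apply_eq_of_natCast_eq {α : Type*} {f : ℕ → α} {N : ℕ}
    (hf : Periodic f N) {a b : ℕ} (h : (a : ZMod N) = b) : f a = f b := by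
  rw [← hf.apply_mod_nat a, ← hf.apply_mod_nat b, (ZMod.natCast_eq_natCast_iff' a b N).mp h]

lemma ZMod.exists_natCast_add_mul_eq {p : ℕ} [Fact p.Prime] {T : ℕ} (hT : ¬ p ∣ T) (k c : ℕ) :
    ∃ m : ℕ, ((k + m * T : ℕ) : ZMod p) = c := by
  have hT0 : (T : ZMod p) ≠ 0 := by rwa [Ne, ZMod.natCast_eq_zero_iff]
  refine ⟨((c - k : ZMod p) * (T : ZMod p)⁻¹).val, ?_⟩
  push_cast
  rw [ZMod.natCast_val, ZMod.cast_id, inv_mul_cancel_right₀ hT0]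
  ring

section Orbit

variable {α : Type*} {f : ℕ → α → α} {x : ℕ → α} {T : ℕ}

lemma step_add_mul_period_eq (hx : ∀ k, x (k + 1) = f k (x k)) (hT : Periodic x T)
    (k m : ℕ) : f (k + m * T) (x k) = x (k + 1) := by
  have hm : Periodic x (m * T) := by simpa only [Nat.cast_id] using hT.nat_mul m
  rw [← hm k, ← hx, add_right_comm, hm]

lemma step_eq_of_not_dvd_period {N : ℕ} [Fact N.Prime] (hf : Periodic f N)
    (hx : ∀ k, x (k + 1) = f k (x k)) (hT : Periodic x T) (hNT : ¬ N ∣ T) (k c : ℕ) :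
    f c (x k) = x (k + 1) := by
  obtain ⟨m, hm⟩ := ZMod.exists_natCast_add_mul_eq hNT k c
  rw [← hf.apply_eq_of_natCast_eq hm, step_add_mul_period_eq hx hT]

end Orbit

theorem pfss_prime_period_orbit_outside_A_dvd_general
    (F : Type*) [Field F] (n N : ℕ) (hNp : N.Prime)
    (A : ℕ → Matrix (Fin n) (Fin n) F)
    (hper : ∀ k, A (k + N) = A k)
    (x : ℕ → (Fin n → F)) (hx : ∀ k, x (k + 1) = (A k) *ᵥ x k)
    (T : ℕ) (hTper : ∀ k, x (k + T) = x k)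
    (hout : ∃ k0, ¬ (∀ i j, i < j → j < N → (A i - A j) *ᵥ x k0 = 0)) :
    N ∣ T := by
  have : Fact N.Prime := ⟨hNp⟩
  by_contra hNT
  obtain ⟨k0, hk0⟩ := hout
  have hstep : ∀ c, A c *ᵥ x k0 = x (k0 + 1) :=
    step_eq_of_not_dvd_period (f := fun k v => A k *ᵥ v) (fun k => congrArg (· *ᵥ ·) (hper k))
      hx hTper hNT k0
  exact hk0 fun i j _ _ => by rw [sub_mulVec, hstep, hstep, sub_self]

theorem pfss_prime_period_orbit_outside_A_dvd
    (F : Type*) [Field F] [Fintype F] (n N : ℕ) (hNp : N.Prime)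
    (A : ℕ → Matrix (Fin n) (Fin n) F)
    (hper : ∀ k, A (k + N) = A k)
    (hns : ∀ k, IsUnit (A k))
    (x : ℕ → (Fin n → F)) (hx : ∀ k, x (k + 1) = (A k) *ᵥ x k)
    (T : ℕ) (hT : 0 < T) (hTper : ∀ k, x (k + T) = x k)
    (hTmin : ∀ T' > 0, (∀ k, x (k + T') = x k) → T ≤ T')
    (hout : ∃ k0, ¬ (∀ i j, i < j → j < N → (A i - A j) *ᵥ x k0 = 0)) :
    N ∣ T :=
  pfss_prime_period_orbit_outside_A_dvd_general F n N hNp A hper x hx T hTper hout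
end

section
/- Let x(k+1) = A(k)x(k) be a non-singular N-periodic linear system over a finite field with N prime and 𝒜 = {0}. Then every periodic orbit other than that of the origin has period divisible by N. -/
open Matrix

theorem pfss_prime_period_A_trivial_orbit_dvd
    (F : Type*) [Field F] [Fintype F] (n N : ℕ) (hNp : N.Prime)
    (A : ℕ → Matrix (Fin n) (Fin n) F)
    (hper : ∀ k, A (k + N) = A k)
    (hns : ∀ k, IsUnit (A k))
    (hA : ∀ v : Fin n → F, (∀ i j, i < j → j < N → (A i - A j) *ᵥ v = 0) → v = 0)
    (x : ℕ → (Fin n → F)) (hx : ∀ k, x (k + 1) = (A k) *ᵥ x k)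
    (hx0 : x 0 ≠ 0)
    (T : ℕ) (hT : 0 < T) (hTper : ∀ k, x (k + T) = x k)
    (hTmin : ∀ T' > 0, (∀ k, x (k + T') = x k) → T ≤ T') :
    N ∣ T := by
  by_contra hndvd
  haveI : Fact N.Prime := ⟨hNp⟩
  have hN0 : 0 < N := hNp.pos
  -- A is N-periodic: A a = A (a % N)
  have hAmod : ∀ a, A a = A (a % N) := by
    intro a
    have key : ∀ q r, A (r + q * N) = A r := by
      intro q
      induction q with
      | zero => simp
      | succ q ih =>
        intro r
        have : r + (q + 1) * N = (r + q * N) + N := by ring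
        rw [this, hper, ih]
    calc A a = A (a % N + a / N * N) := by rw [Nat.mod_add_div']
      _ = A (a % N) := key _ _
  -- multiples of T are periods
  have hmul : ∀ m k, x (k + m * T) = x k := by
    intro m
    induction m with
    | zero => simp
    | succ m ih =>
      intro k
      have : k + (m + 1) * T = (k + m * T) + T := by ring
      rw [this, hTper, ih]
  -- key: A (m*T) *ᵥ x 0 = A 0 *ᵥ x 0
  have key : ∀ m, A (m * T) *ᵥ x 0 = A 0 *ᵥ x 0 := by
    intro m
    have h1 : x (m * T + 1) = A (m * T) *ᵥ x 0 := by
      rw [hx]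
      have : x (m * T) = x 0 := by
        have := hmul m 0; simpa using this
      rw [this]
    have h2 : x (m * T + 1) = A 0 *ᵥ x 0 := by
      have : x (m * T + 1) = x (1 + m * T) := by ring_nf
      rw [this, hmul, hx]
    rw [← h1, h2]
  -- for each i < N, find m with (m*T) % N = i
  have hits : ∀ i, i < N → A i *ᵥ x 0 = A 0 *ᵥ x 0 := by
    intro i hi
    have ht : (T : ZMod N) ≠ 0 := by
      simpa [ZMod.natCast_eq_zero_iff] using hndvd
    set m := ((i : ZMod N) * (T : ZMod N)⁻¹).val with hm
    have hz : ((m * T : ℕ) : ZMod N) = (i : ZMod N) := by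
      push_cast
      rw [hm, ZMod.natCast_val, ZMod.cast_id]
      field_simp
    have hmod : (m * T) % N = i := by
      have := congrArg ZMod.val hz
      rwa [ZMod.val_natCast, ZMod.val_natCast, Nat.mod_eq_of_lt hi] at this
    calc A i *ᵥ x 0 = A ((m * T) % N) *ᵥ x 0 := by rw [hmod]
      _ = A (m * T) *ᵥ x 0 := by rw [← hAmod]
      _ = A 0 *ᵥ x 0 := key m
  -- conclude via hA
  apply hx0
  apply hA
  intro i j hij hjN
  rw [Matrix.sub_mulVec, hits i (hij.trans hjN), hits j hjN, sub_self]
end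

section
/- Let x(k+1) = A(k)x(k) be a non-singular N-periodic linear system over a field K. A Floquet transform exists — i.e., there exist invertible N-periodic matrices P(k) (P(k+N) = P(k)) and a constant matrix Ã with Ã = P(k+1) A(k) P(k)⁻¹ for all k — if and only if the monodromy matrix Φ = A(N−1)⋯A(1)A(0) admits an N-th root over K (a matrix B with B^N = Φ). -/
/-!
Write `Φ k = A (k - 1) * ⋯ * A 0` (`stateTransition A k`), so that `Φ N` is the monodromy.
If a periodic gauge `P` satisfies `C * P k = P (k + 1) * A k`, iterating gives
`C ^ N * P 0 = P 0 * Φ N`, so `(P 0)⁻¹ * C * P 0` is an `N`-th root of `Φ N`. Conversely, if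
`B ^ N = Φ N`, the gauge `P k = B ^ k * (Φ k)⁻¹` transforms the system into
the constant one `B`, and it is `N`-periodic because `Φ (k + N) = Φ k * Φ N`. Only the monoid
structure of matrices is involved, the inverses living in the group of units.
-/

section StateTransition

variable {M : Type*} [Monoid M]

def stateTransition (A : ℕ → M) (k : ℕ) : M :=
  ((List.range k).reverse.map A).prod

@[simp]
theorem stateTransition_zero (A : ℕ → M) : stateTransition A 0 = 1 := rfl

theorem stateTransition_succ (A : ℕ → M) (k : ℕ) :
    stateTransition A (k + 1) = A k * stateTransition A k := by
  simp [stateTransition, List.range_succ]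

theorem map_stateTransition {F M' : Type*} [Monoid M'] [FunLike F M M'] [MonoidHomClass F M M']
    (f : F) (A : ℕ → M) (k : ℕ) : f (stateTransition A k) = stateTransition (f ∘ A) k := by
  simp [stateTransition, map_list_prod, List.map_map]

theorem stateTransition_add_period {A : ℕ → M} {N : ℕ} (hper : ∀ k, A (k + N) = A k) (k : ℕ) :
    stateTransition A (k + N) = stateTransition A k * stateTransition A N := by
  induction k with
  | zero => simp
  | succ k ih =>
    rw [Nat.add_right_comm, stateTransition_succ, ih, hper, stateTransition_succ, mul_assoc]

theorem isUnit_stateTransition {A : ℕ → M} (hA : ∀ k, IsUnit (A k)) (k : ℕ) :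
    IsUnit (stateTransition A k) := by
  induction k with
  | zero => exact isUnit_one
  | succ k ih => rw [stateTransition_succ]; exact (hA k).mul ih

theorem pow_mul_eq_mul_stateTransition {A P : ℕ → M} {C : M}
    (hC : ∀ k, C * P k = P (k + 1) * A k) (k : ℕ) :
    C ^ k * P 0 = P k * stateTransition A k := by
  induction k with
  | zero => simp
  | succ k ih => rw [pow_succ', mul_assoc, ih, ← mul_assoc, hC, stateTransition_succ, mul_assoc]

theorem exists_pow_eq_stateTransition_of_intertwines {A P : ℕ → M} {C : M} {N : ℕ}
    (hP : IsUnit (P 0)) (hPN : P N = P 0) (hC : ∀ k, C * P k = P (k + 1) * A k) :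
    ∃ B, B ^ N = stateTransition A N := by
  obtain ⟨u, hu⟩ := hP
  have hconj : SemiconjBy (u : M) (↑u⁻¹ * C * u) C := by
    rw [SemiconjBy, mul_assoc, Units.mul_inv_cancel_left]
  refine ⟨↑u⁻¹ * C * u, (u.mul_right_inj).mp ?_⟩
  rw [(hconj.pow_right N).eq, hu, pow_mul_eq_mul_stateTransition hC, hPN]

theorem pow_mul_inv_stateTransition_add_period {G : Type*} [Group G] {A : ℕ → G} {B : G} {N : ℕ}
    (hper : ∀ k, A (k + N) = A k) (hB : B ^ N = stateTransition A N) (k : ℕ) :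
    B ^ (k + N) * (stateTransition A (k + N))⁻¹ = B ^ k * (stateTransition A k)⁻¹ := by
  rw [pow_add, stateTransition_add_period hper, hB, mul_inv_rev]
  group

theorem mul_pow_mul_inv_stateTransition {G : Type*} [Group G] (A : ℕ → G) (B : G) (k : ℕ) :
    B * (B ^ k * (stateTransition A k)⁻¹) =
      B ^ (k + 1) * (stateTransition A (k + 1))⁻¹ * A k := by
  rw [stateTransition_succ, mul_inv_rev, pow_succ']
  group

theorem exists_intertwiner_of_pow_eq_stateTransition {A : ℕ → M} {B : M} {N : ℕ} (hN : N ≠ 0)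
    (hper : ∀ k, A (k + N) = A k) (hA : ∀ k, IsUnit (A k)) (hB : B ^ N = stateTransition A N) :
    ∃ P : ℕ → Mˣ, (∀ k, P (k + N) = P k) ∧ ∀ k, B * P k = P (k + 1) * A k := by
  obtain ⟨b, rfl⟩ : IsUnit B := (isUnit_pow_iff hN).mp (hB ▸ isUnit_stateTransition hA N)
  choose a ha using hA
  obtain rfl : Units.val ∘ a = A := funext ha
  have hb : b ^ N = stateTransition a N := Units.ext <| by
    rw [Units.val_pow_eq_pow_val, hB, ← Units.coeHom_apply, map_stateTransition]; rfl
  refine ⟨fun k => b ^ k * (stateTransition a k)⁻¹,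
    pow_mul_inv_stateTransition_add_period (fun k => Units.ext (hper k)) hb,
    fun k => congrArg Units.val (mul_pow_mul_inv_stateTransition a b k)⟩

theorem exists_intertwiner_iff_exists_pow_eq_stateTransition {A : ℕ → M} {N : ℕ} (hN : N ≠ 0)
    (hper : ∀ k, A (k + N) = A k) (hA : ∀ k, IsUnit (A k)) :
    (∃ (P : ℕ → M) (C : M), (∀ k, IsUnit (P k)) ∧ (∀ k, P (k + N) = P k) ∧
        ∀ k, C * P k = P (k + 1) * A k) ↔
      ∃ B, B ^ N = stateTransition A N := by
  constructor
  · rintro ⟨P, C, hPu, hPper, hC⟩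
    exact exists_pow_eq_stateTransition_of_intertwines (hPu 0) (by simpa using hPper 0) hC
  · rintro ⟨B, hB⟩
    obtain ⟨P, hPper, hBP⟩ := exists_intertwiner_of_pow_eq_stateTransition hN hper hA hB
    exact ⟨fun k => P k, B, fun k => (P k).isUnit, fun k => congrArg Units.val (hPper k), hBP⟩

end StateTransition

theorem Matrix.eq_mul_nonsing_inv_iff_mul_eq {n α : Type*} [Fintype n] [DecidableEq n]
    [CommRing α] {P C D : Matrix n n α} (hP : IsUnit P) : C = D * P⁻¹ ↔ C * P = D := by
  obtain ⟨u, rfl⟩ := hP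
  rw [← coe_units_inv, Units.eq_mul_inv_iff_mul_eq]

theorem floquet_exists_iff_monodromy_has_root
    (K : Type*) [Field K] (n N : ℕ) (hN : 0 < N)
    (A : ℕ → Matrix (Fin n) (Fin n) K)
    (hper : ∀ k, A (k + N) = A k)
    (hns : ∀ k, IsUnit (A k)) :
    (∃ (P : ℕ → Matrix (Fin n) (Fin n) K) (Atil : Matrix (Fin n) (Fin n) K),
        (∀ k, IsUnit (P k)) ∧ (∀ k, P (k + N) = P k) ∧
        (∀ k, Atil = P (k + 1) * A k * (P k)⁻¹)) ↔
    (∃ B : Matrix (Fin n) (Fin n) K,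
        B ^ N = ((List.range N).reverse.map A).prod) := by
  rw [← stateTransition, ← exists_intertwiner_iff_exists_pow_eq_stateTransition hN.ne' hper hns]
  refine exists_congr fun P => exists_congr fun Atil => ?_
  refine and_congr_right fun hPu => and_congr_right fun _ => ?_
  exact forall_congr' fun k => Matrix.eq_mul_nonsing_inv_iff_mul_eq (hPu k)
end
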